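/- arXiv:math/0309162 — 3 statements merged into one kernel-verified Lean document; each statement's English description precedes it below -/
import Mathlib

section
/- Let g be a finite-dimensional simple complex Lie algebra, {X_i} a basis of g and {X^i} the dual basis with respect to the Killing form κ. Then every symmetric invariant tensor t ∈ g ⊗ g is of the form t = λ Σ_i X_i ⊗ X^i for some λ ∈ ℂ; that is, every infinitesimal R-matrix of g is a scalar multiple of the Casimir tensor of the Killing form. -/
/-!
STATEMENT 3: For a finite-dimensional simple complex Lie algebra g, with a basis {X_i}
and its dual basis {X^i} with respect to the Killing form, every symmetric invariant
tensor t ∈ g ⊗ g equals λ Σ_i X_i ⊗ X^i for some λ ∈ ℂ.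
-/

open scoped TensorProduct

theorem statement3 {g : Type*} [LieRing g] [LieAlgebra ℂ g] [Module.Finite ℂ g]
    [LieAlgebra.IsSimple ℂ g]
    {ι : Type*} [Fintype ι] [DecidableEq ι] (e : Module.Basis ι ℂ g) (e' : ι → g)
    (he' : ∀ i j, killingForm ℂ g (e i) (e' j) = if i = j then 1 else 0)
    (t : g ⊗[ℂ] g) (hsymm : (TensorProduct.comm ℂ g g) t = t)
    (hinv : ∀ X : g, ⁅X, t⁆ = (0 : g ⊗[ℂ] g)) :
    ∃ lam : ℂ, t = lam • ∑ i, e i ⊗ₜ[ℂ] e' i := by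
  classical
  haveI : FiniteDimensional ℂ g := ‹Module.Finite ℂ g›
  haveI : Nontrivial g := by
    rcases subsingleton_or_nontrivial g with h | h
    · exact absurd ⟨fun x y => Subsingleton.elim _ _⟩ (LieAlgebra.IsSimple.non_abelian ℂ (L := g))
    · exact h
  set κ : g →ₗ[ℂ] g →ₗ[ℂ] ℂ := killingForm ℂ g with hκ
  have κsymm : ∀ x y : g, κ x y = κ y x := fun x y => LieModule.traceForm_comm ℂ g g x y
  -- nondegeneracy from the dual basis hypothesis
  have hnd : ∀ z : g, (∀ y : g, κ y z = 0) → z = 0 := by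
    intro z hz
    have : ∀ j, e.repr z j = 0 := by
      intro j
      have hx : κ (e' j) z = 0 := hz _
      have : κ z (e' j) = ∑ i, e.repr z i * κ (e i) (e' j) := by
        conv_lhs => rw [← e.sum_repr z]
        simp [map_sum, Finset.sum_apply, LinearMap.smul_apply, smul_eq_mul, -Module.Basis.sum_repr]
      rw [κsymm z (e' j)] at this
      rw [hx] at this
      simpa [he'] using this.symm
    exact e.repr.map_eq_zero_iff.mp (by ext j; simp [this j])
  -- the map ψ : g ⊗ g → End(g)
  set ψ : g ⊗[ℂ] g →ₗ[ℂ] (g →ₗ[ℂ] g) :=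
    (dualTensorHom ℂ g g).comp (LinearMap.rTensor g κ) with hψ
  have ψ_tmul : ∀ (a b x : g), ψ (a ⊗ₜ[ℂ] b) x = κ a x • b := by
    intro a b x; simp [hψ]
  -- ψ is injective
  have hψinj : Function.Injective ψ := by
    have h1 : Function.Injective (LinearMap.rTensor g κ) := by
      apply Module.Flat.rTensor_preserves_injective_linearMap
      intro a b hab
      have : ∀ y : g, κ y (a - b) = 0 := by
        intro y
        have : κ a y = κ b y := by rw [LinearMap.ext_iff] at hab; exact hab y
        rw [map_sub]
        simp [κsymm y a, κsymm y b, this]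
      simpa [sub_eq_zero] using hnd _ this
    have h2 : Function.Injective (dualTensorHom ℂ g g) := by
      have := (dualTensorHomEquiv ℂ g g).injective
      rwa [show ((dualTensorHomEquiv ℂ g g) : Module.Dual ℂ g ⊗[ℂ] g → (g →ₗ[ℂ] g)) =
        (dualTensorHom ℂ g g) from rfl] at this
    exact h2.comp h1
  -- ψ of the Casimir tensor is the identity
  have hcas : ψ (∑ i, e i ⊗ₜ[ℂ] e' i) = LinearMap.id := by
    ext x
    rw [map_sum]
    simp only [LinearMap.coe_sum, Finset.sum_apply, LinearMap.id_coe, id_eq]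
    have key : ∑ i, ψ (e i ⊗ₜ[ℂ] e' i) x = ∑ i, κ (e i) x • e' i := by
      refine Finset.sum_congr rfl fun i _ => by rw [ψ_tmul]
    rw [key]
    -- show x - Σ κ(e i, x) • e' i pairs to zero with everything
    have : ∀ y : g, κ y (x - ∑ i, κ (e i) x • e' i) = 0 := by
      intro y
      have hy : ∀ z, κ y z = ∑ j, e.repr y j * κ (e j) z := by
        intro z
        conv_lhs => rw [← e.sum_repr y]
        simp [map_sum, Finset.sum_apply, LinearMap.smul_apply, smul_eq_mul, -Module.Basis.sum_repr]
      rw [map_sub, hy x, hy (∑ i, κ (e i) x • e' i)]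
      have : ∀ j, κ (e j) (∑ i, κ (e i) x • e' i) = κ (e j) x := by
        intro j
        rw [map_sum]
        simp only [map_smul, smul_eq_mul, he']
        simp [Finset.sum_ite_eq', mul_comm]
      simp only [this]
      ring
    have := hnd _ this
    rw [sub_eq_zero] at this
    exact this.symm
  -- φ := ψ t commutes with the adjoint action
  set φ : g →ₗ[ℂ] g := ψ t with hφ
  have hcomm : ∀ (X x : g), φ ⁅X, x⁆ = ⁅X, φ x⁆ := by
    intro X x
    have key : ∀ s : g ⊗[ℂ] g, ψ ⁅X, s⁆ x = ⁅X, ψ s x⁆ - ψ s ⁅X, x⁆ := by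
      intro s
      induction s using TensorProduct.induction_on with
      | zero => simp
      | tmul a b =>
        rw [TensorProduct.LieModule.lie_tmul_right, map_add, LinearMap.add_apply,
          ψ_tmul, ψ_tmul, ψ_tmul, ψ_tmul]
        have h1 : κ ⁅X, a⁆ x = - κ a ⁅X, x⁆ := by
          have := LieModule.traceForm_apply_lie_apply ℂ g g X a x
          have h2 := LieModule.traceForm_apply_lie_apply ℂ g g a X x
          -- κ(⁅X,a⁆, x) = κ(X, ⁅a,x⁆);  κ(⁅a,X⁆,x) = κ(a,⁅X,x⁆)
          have h3 : κ ⁅a, X⁆ x = κ a ⁅X, x⁆ := h2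
          have h4 : κ ⁅X, a⁆ x = - κ ⁅a, X⁆ x := by
            rw [show (⁅X, a⁆ : g) = -⁅a, X⁆ from (lie_skew X a).symm, map_neg,
              LinearMap.neg_apply]
          rw [h4, h3]
        rw [h1, lie_smul]
        module
      | add u v hu hv =>
        simp only [lie_add, map_add, LinearMap.add_apply, hu, hv]
        abel
    have := key t
    rw [hinv X] at this
    simp only [map_zero, LinearMap.zero_apply] at this
    have := sub_eq_zero.mp this.symm
    exact (this).symm
  -- Schur: φ = lam • id
  obtain ⟨lam, hlam⟩ := Module.End.exists_eigenvalue φ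
  have hker : ∀ x ∈ Module.End.eigenspace φ lam, ∀ X : g, ⁅X, x⁆ ∈ Module.End.eigenspace φ lam := by
    intro x hx X
    rw [Module.End.mem_eigenspace_iff] at hx ⊢
    rw [hcomm, hx, lie_smul]
  set I : LieIdeal ℂ g :=
    { carrier := Module.End.eigenspace φ lam
      add_mem' := fun ha hb => add_mem ha hb
      zero_mem' := zero_mem _
      smul_mem' := fun c x hx => Submodule.smul_mem _ c hx
      lie_mem := fun {X x} hx => hker x hx X } with hI
  have hIne : I ≠ ⊥ := by
    intro h
    obtain ⟨v, hv0, hv⟩ := hlam.exists_hasEigenvector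
    have hvI : v ∈ I := hv0
    rw [h] at hvI
    exact hv (by simpa using hvI)
  have hItop : I = ⊤ := (LieAlgebra.IsSimple.eq_bot_or_eq_top I).resolve_left hIne
  have hφeq : φ = lam • LinearMap.id := by
    ext x
    have hx : x ∈ I := hItop ▸ trivial
    have hx' : x ∈ Module.End.eigenspace φ lam := hx
    have : φ x = lam • x := Module.End.mem_eigenspace_iff.mp hx'
    simpa using this
  refine ⟨lam, hψinj ?_⟩
  rw [map_smul, hcas, ← hφ, hφeq]
end

section
/- Let g be a complex Lie algebra, ι : g → U(g) the canonical embedding into its universal enveloping algebra, and t ∈ g ⊗ g an invariant tensor. Define T₁₂, T₁₃, T₂₃ ∈ U(g) ⊗ U(g) ⊗ U(g) as the images of t under the linear maps a⊗b ↦ ι(a)⊗ι(b)⊗1, a⊗b ↦ ι(a)⊗1⊗ι(b), a⊗b ↦ 1⊗ι(a)⊗ι(b) respectively. Then [T₁₃ + T₂₃, T₁₂] = 0; equivalently, for any presentation t = Σ_i a_i ⊗ b_i one has Σ_{i,j} ( a_j a_i ⊗ b_i ⊗ b_j − a_i a_j ⊗ b_i ⊗ b_j + a_i ⊗ a_j b_i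 ⊗ b_j − a_i ⊗ b_i a_j ⊗ b_j ) = 0 in U(g) ⊗ U(g) ⊗ U(g) (the four-term relation). -/
/-!
STATEMENT 5: For a complex Lie algebra g with canonical embedding ι : g → U(g) and an
invariant tensor t ∈ g ⊗ g, the elements T₁₂, T₁₃, T₂₃ ∈ U(g)⊗U(g)⊗U(g) satisfy
[T₁₃ + T₂₃, T₁₂] = 0; equivalently, for any presentation t = Σ_i a_i ⊗ b_i the
four-term relation Σ_{i,j}(a_j a_i⊗b_i⊗b_j − a_i a_j⊗b_i⊗b_j + a_i⊗a_j b_i⊗b_j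
− a_i⊗b_i a_j⊗b_j) = 0 holds.
-/

open scoped TensorProduct

noncomputable section

variable {g : Type*} [LieRing g] [LieAlgebra ℂ g]

/-- The universal enveloping algebra of `g`. -/
local notation "Ug" => UniversalEnvelopingAlgebra ℂ g

section

attribute [local instance 100] LieRing.ofAssociativeRing

/-- The canonical embedding `g → U(g)` as a linear map. -/
def iU (g : Type*) [LieRing g] [LieAlgebra ℂ g] :
    g →ₗ[ℂ] UniversalEnvelopingAlgebra ℂ g :=
  (UniversalEnvelopingAlgebra.ι ℂ).toLinearMap

end

/-- The linear map `g ⊗ g → U(g)⊗U(g)⊗U(g)`, `a ⊗ b ↦ ι(a) ⊗ ι(b) ⊗ 1`. -/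
def map12 (g : Type*) [LieRing g] [LieAlgebra ℂ g] :
    g ⊗[ℂ] g →ₗ[ℂ]
      UniversalEnvelopingAlgebra ℂ g ⊗[ℂ]
        (UniversalEnvelopingAlgebra ℂ g ⊗[ℂ] UniversalEnvelopingAlgebra ℂ g) :=
  TensorProduct.map (iU g)
    (((TensorProduct.mk ℂ _ _).flip (1 : UniversalEnvelopingAlgebra ℂ g)).comp (iU g))

/-- `a ⊗ b ↦ ι(a) ⊗ 1 ⊗ ι(b)`. -/
def map13 (g : Type*) [LieRing g] [LieAlgebra ℂ g] :
    g ⊗[ℂ] g →ₗ[ℂ]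
      UniversalEnvelopingAlgebra ℂ g ⊗[ℂ]
        (UniversalEnvelopingAlgebra ℂ g ⊗[ℂ] UniversalEnvelopingAlgebra ℂ g) :=
  TensorProduct.map (iU g)
    ((TensorProduct.mk ℂ _ _ (1 : UniversalEnvelopingAlgebra ℂ g)).comp (iU g))

/-- `a ⊗ b ↦ 1 ⊗ ι(a) ⊗ ι(b)`. -/
def map23 (g : Type*) [LieRing g] [LieAlgebra ℂ g] :
    g ⊗[ℂ] g →ₗ[ℂ]
      UniversalEnvelopingAlgebra ℂ g ⊗[ℂ]
        (UniversalEnvelopingAlgebra ℂ g ⊗[ℂ] UniversalEnvelopingAlgebra ℂ g) :=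
  (TensorProduct.mk ℂ _ _ (1 : UniversalEnvelopingAlgebra ℂ g)).comp
    (TensorProduct.map (iU g) (iU g))

lemma key_four_term {g : Type*} [LieRing g] [LieAlgebra ℂ g] {κ : Type*} (s : Finset κ)
    (a b : κ → g)
    (hinv : ∀ X : g, ⁅X, ∑ i ∈ s, a i ⊗ₜ[ℂ] b i⁆ = (0 : g ⊗[ℂ] g)) :
    ∑ j ∈ s, ∑ i ∈ s,
        ((iU g (a j) * iU g (a i)) ⊗ₜ[ℂ] (iU g (b i) ⊗ₜ[ℂ] iU g (b j))
          - (iU g (a i) * iU g (a j)) ⊗ₜ[ℂ] (iU g (b i) ⊗ₜ[ℂ] iU g (b j))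
          + iU g (a i) ⊗ₜ[ℂ] ((iU g (a j) * iU g (b i)) ⊗ₜ[ℂ] iU g (b j))
          - iU g (a i) ⊗ₜ[ℂ] ((iU g (b i) * iU g (a j)) ⊗ₜ[ℂ] iU g (b j))) = 0 := by
  refine Finset.sum_eq_zero fun j hj => ?_
  set φ : g ⊗[ℂ] g →ₗ[ℂ] _ :=
    TensorProduct.map (iU g)
      (((TensorProduct.mk ℂ (UniversalEnvelopingAlgebra ℂ g)
        (UniversalEnvelopingAlgebra ℂ g)).flip (iU g (b j))).comp (iU g)) with hφ
  have h1 : φ ⁅a j, ∑ i ∈ s, a i ⊗ₜ[ℂ] b i⁆ = 0 := by rw [hinv (a j), map_zero]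
  simp only [← LieModule.toEnd_apply_apply ℂ, map_sum] at h1
  simp only [LieModule.toEnd_apply_apply] at h1
  simp only [map_sum, TensorProduct.LieModule.lie_tmul_right, map_add, hφ,
    TensorProduct.map_tmul, LinearMap.comp_apply, TensorProduct.mk_apply,
    LinearMap.flip_apply] at h1
  rw [← h1]
  refine Finset.sum_congr rfl fun i hi => ?_
  have ha : iU g ⁅a j, a i⁆ = iU g (a j) * iU g (a i) - iU g (a i) * iU g (a j) := by
    simp [iU, Ring.lie_def]
  have hb : iU g ⁅a j, b i⁆ = iU g (a j) * iU g (b i) - iU g (b i) * iU g (a j) := by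
    simp [iU, Ring.lie_def]
  rw [ha, hb, TensorProduct.sub_tmul, TensorProduct.sub_tmul, TensorProduct.tmul_sub]
  abel

theorem statement5 {g : Type*} [LieRing g] [LieAlgebra ℂ g]
    (t : g ⊗[ℂ] g) (hinv : ∀ X : g, ⁅X, t⁆ = (0 : g ⊗[ℂ] g)) :
    (map13 g t + map23 g t) * map12 g t = map12 g t * (map13 g t + map23 g t) ∧
    ∀ {ι : Type} (s : Finset ι) (a b : ι → g), t = ∑ i ∈ s, a i ⊗ₜ[ℂ] b i →
      ∑ j ∈ s, ∑ i ∈ s,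
        ((iU g (a j) * iU g (a i)) ⊗ₜ[ℂ] (iU g (b i) ⊗ₜ[ℂ] iU g (b j))
          - (iU g (a i) * iU g (a j)) ⊗ₜ[ℂ] (iU g (b i) ⊗ₜ[ℂ] iU g (b j))
          + iU g (a i) ⊗ₜ[ℂ] ((iU g (a j) * iU g (b i)) ⊗ₜ[ℂ] iU g (b j))
          - iU g (a i) ⊗ₜ[ℂ] ((iU g (b i) * iU g (a j)) ⊗ₜ[ℂ] iU g (b j))) = 0 := by
  constructor
  · obtain ⟨S, hS⟩ := TensorProduct.exists_finset t
    have hk := key_four_term S (fun p => p.1) (fun p => p.2) (fun X => hS ▸ hinv X)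
    simp only [Finset.sum_sub_distrib, Finset.sum_add_distrib] at hk
    rw [hS]
    simp only [map12, map13, map23, map_sum, TensorProduct.map_tmul, LinearMap.comp_apply,
      TensorProduct.mk_apply, LinearMap.flip_apply]
    rw [add_mul, mul_add, Finset.sum_mul, Finset.sum_mul, Finset.mul_sum, Finset.mul_sum]
    simp only [Finset.mul_sum, Finset.sum_mul, Algebra.TensorProduct.tmul_mul_tmul,
      one_mul, mul_one]
    rw [← sub_eq_zero, ← hk]
    abel
  · intro κ s a b ht
    exact key_four_term s a b (fun X => ht ▸ hinv X)
end
end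

section
/- Suppose m ∈ ℤ and p ∈ ℂ satisfy |p| ∉ {|m|+1, |m|+2, |m|+3, …} (so that C_α ≠ 0 for all α ≥ |m|+1). Then every ℂ-linear endomorphism T of V(m) that commutes with all six operators of ρ(m,p) (i.e. T∘H₃ = H₃∘T, T∘H₊ = H₊∘T, T∘H₋ = H₋∘T, T∘F₃ = F₃∘T, T∘F₊ = F₊∘T, T∘F₋ = F₋∘T) is a scalar multiple of the identity. In particular the representation ρ(m,p) admits a central character. -/
/-!
STATEMENT 9: If m ∈ ℤ and p ∈ ℂ satisfy |p| ∉ {|m|+1, |m|+2, …} (so that C_α ≠ 0 for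
α ≥ |m|+1), then every ℂ-linear endomorphism of V(m) commuting with the six operators
of ρ(m,p) is a scalar multiple of the identity; in particular ρ(m,p) admits a central
character.
-/

open Complex

noncomputable section

/-- Index set for the basis `{v^α_k : |m| ≤ α, |k| ≤ α}` of `V(m)`. -/
abbrev VIdx (m : ℤ) : Type := {x : ℤ × ℤ // |m| ≤ x.1 ∧ |x.2| ≤ x.1}

/-- `V(m)`: the free complex vector space on the basis `{v^α_k}`. -/
abbrev Vm (m : ℤ) : Type := VIdx m →₀ ℂ

/-- The basis vector `v^α_k`, with the convention that it is `0` for invalid indices. -/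
def bv (m α k : ℤ) : Vm m :=
  if h : |m| ≤ α ∧ |k| ≤ α then Finsupp.single ⟨(α, k), h⟩ 1 else 0

/-- The nonnegative real square root of an integer, as a complex number. -/
def sqc (x : ℤ) : ℂ := ((Real.sqrt (x : ℝ) : ℝ) : ℂ)

/-- The coefficient `B_α = i p m / (α(α+1))` (with `B_0 = 0`). -/
def Bco (m : ℤ) (p : ℂ) (α : ℤ) : ℂ :=
  if α = 0 then 0 else Complex.I * p * (m : ℂ) / ((α : ℂ) * ((α : ℂ) + 1))

/-- `H₃ v^α_k = k v^α_k`. -/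
def opH3 (m : ℤ) : Module.End ℂ (Vm m) :=
  Finsupp.lift (Vm m) ℂ (VIdx m) fun x => (x.1.2 : ℂ) • bv m x.1.1 x.1.2

/-- `H₋ v^α_k = √((α+k)(α−k+1)) v^α_{k−1}`. -/
def opHm (m : ℤ) : Module.End ℂ (Vm m) :=
  Finsupp.lift (Vm m) ℂ (VIdx m) fun x =>
    sqc ((x.1.1 + x.1.2) * (x.1.1 - x.1.2 + 1)) • bv m x.1.1 (x.1.2 - 1)

/-- `H₊ v^α_k = √((α+k+1)(α−k)) v^α_{k+1}`. -/
def opHp (m : ℤ) : Module.End ℂ (Vm m) :=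
  Finsupp.lift (Vm m) ℂ (VIdx m) fun x =>
    sqc ((x.1.1 + x.1.2 + 1) * (x.1.1 - x.1.2)) • bv m x.1.1 (x.1.2 + 1)

/-- `F₊ v^α_k = C_α √((α−k)(α−k−1)) v^{α−1}_{k+1} − B_α √((α+k+1)(α−k)) v^α_{k+1}
    + C_{α+1} √((α+k+1)(α+k+2)) v^{α+1}_{k+1}`. -/
def opFp (m : ℤ) (p : ℂ) (C : ℤ → ℂ) : Module.End ℂ (Vm m) :=
  Finsupp.lift (Vm m) ℂ (VIdx m) fun x =>
    (C x.1.1 * sqc ((x.1.1 - x.1.2) * (x.1.1 - x.1.2 - 1))) • bv m (x.1.1 - 1) (x.1.2 + 1)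
    - (Bco m p x.1.1 * sqc ((x.1.1 + x.1.2 + 1) * (x.1.1 - x.1.2))) • bv m x.1.1 (x.1.2 + 1)
    + (C (x.1.1 + 1) * sqc ((x.1.1 + x.1.2 + 1) * (x.1.1 + x.1.2 + 2)))
        • bv m (x.1.1 + 1) (x.1.2 + 1)

/-- `F₋ v^α_k = −C_α √((α+k)(α+k−1)) v^{α−1}_{k−1} − B_α √((α−k+1)(α+k)) v^α_{k−1}
    − C_{α+1} √((α+1−k)(α+1+k)) v^{α+1}_{k−1}`. -/
def opFm (m : ℤ) (p : ℂ) (C : ℤ → ℂ) : Module.End ℂ (Vm m) :=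
  Finsupp.lift (Vm m) ℂ (VIdx m) fun x =>
    -((C x.1.1 * sqc ((x.1.1 + x.1.2) * (x.1.1 + x.1.2 - 1))) • bv m (x.1.1 - 1) (x.1.2 - 1))
    - (Bco m p x.1.1 * sqc ((x.1.1 - x.1.2 + 1) * (x.1.1 + x.1.2))) • bv m x.1.1 (x.1.2 - 1)
    - (C (x.1.1 + 1) * sqc ((x.1.1 + 1 - x.1.2) * (x.1.1 + 1 + x.1.2)))
        • bv m (x.1.1 + 1) (x.1.2 - 1)

/-- `F₃ v^α_k = C_α √((α−k)(α+k)) v^{α−1}_k − B_α k v^α_k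
    − C_{α+1} √((α+1−k)(α+1+k)) v^{α+1}_k`. -/
def opF3 (m : ℤ) (p : ℂ) (C : ℤ → ℂ) : Module.End ℂ (Vm m) :=
  Finsupp.lift (Vm m) ℂ (VIdx m) fun x =>
    (C x.1.1 * sqc ((x.1.1 - x.1.2) * (x.1.1 + x.1.2))) • bv m (x.1.1 - 1) x.1.2
    - (Bco m p x.1.1 * (x.1.2 : ℂ)) • bv m x.1.1 x.1.2
    - (C (x.1.1 + 1) * sqc ((x.1.1 + 1 - x.1.2) * (x.1.1 + 1 + x.1.2))) • bv m (x.1.1 + 1) x.1.2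

/-- The hypothesis on the coefficients `C_α`:
`C_α² = −(α²−p²)(α²−m²)/(α²(4α²−1))` for `α ≥ |m|+1`. -/
def Csq (m : ℤ) (p : ℂ) (C : ℤ → ℂ) : Prop :=
  ∀ α : ℤ, |m| + 1 ≤ α →
    C α ^ 2 = -(((α : ℂ) ^ 2 - p ^ 2) * ((α : ℂ) ^ 2 - (m : ℂ) ^ 2)) /
      ((α : ℂ) ^ 2 * (4 * (α : ℂ) ^ 2 - 1))

lemma sqc_sq {x : ℤ} (h : 0 ≤ x) : sqc x * sqc x = (x : ℂ) := by
  unfold sqc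
  rw [← Complex.ofReal_mul, Real.mul_self_sqrt (by exact_mod_cast h)]
  norm_cast

lemma sqc_ne {x : ℤ} (h : 0 < x) : sqc x ≠ 0 := by
  unfold sqc
  simp only [ne_eq, Complex.ofReal_eq_zero]
  exact ne_of_gt (Real.sqrt_pos.mpr (by exact_mod_cast h))

lemma bv_valid {m α k : ℤ} (h : |m| ≤ α ∧ |k| ≤ α) :
    bv m α k = Finsupp.single (⟨(α,k),h⟩ : VIdx m) 1 := dif_pos h

lemma bv_not {m α k : ℤ} (h : ¬(|m| ≤ α ∧ |k| ≤ α)) : bv m α k = 0 := dif_neg h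

lemma bv_eta {m : ℤ} (x : VIdx m) : bv m x.1.1 x.1.2 = Finsupp.single x 1 := by
  rw [bv_valid x.2]

lemma lift_single {m : ℤ} (f : VIdx m → Vm m) (x : VIdx m) :
    Finsupp.lift (Vm m) ℂ (VIdx m) f (Finsupp.single x 1) = f x := by
  simp [Finsupp.lift_apply, Finsupp.sum_single_index]

lemma lift_diag_apply {m : ℤ} (d : VIdx m → ℂ) (v : Vm m) (y : VIdx m) :
    Finsupp.lift (Vm m) ℂ (VIdx m) (fun x => d x • Finsupp.single x 1) v y = d y * v y := by
  rw [Finsupp.lift_apply, Finsupp.sum_apply, Finsupp.sum]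
  rw [Finset.sum_eq_single y]
  · simp [Finsupp.single_apply, mul_comm]
  · intro b _ hb
    simp [Finsupp.single_apply, hb]
  · intro h
    simp [Finsupp.notMem_support_iff.mp h]
lemma opH3_eq (m : ℤ) : opH3 m = Finsupp.lift (Vm m) ℂ (VIdx m)
    (fun x => ((x.1.2 : ℂ)) • Finsupp.single x 1) := by
  unfold opH3
  congr 1
  funext x
  rw [bv_eta]

lemma Q_eq (m : ℤ) : opHp m * opHm m = Finsupp.lift (Vm m) ℂ (VIdx m)
    (fun x => (((x.1.1 + x.1.2) * (x.1.1 - x.1.2 + 1) : ℤ) : ℂ) • Finsupp.single x 1) := by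
  apply Finsupp.lhom_ext'
  intro a
  apply LinearMap.ext
  intro b
  simp only [LinearMap.comp_apply, Finsupp.lsingle_apply]
  have hb : Finsupp.single a b = b • Finsupp.single a (1:ℂ) := by
    rw [Finsupp.smul_single, smul_eq_mul, mul_one]
  rw [hb, map_smul, map_smul]
  congr 1
  rw [Module.End.mul_apply]
  obtain ⟨⟨α, k⟩, hv⟩ := a
  rw [show (Finsupp.single (⟨(α,k),hv⟩ : VIdx m) (1:ℂ)) = bv m α k from (bv_valid hv).symm,
        bv_valid hv]
  unfold opHm
  rw [lift_single]
  simp only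
  rw [map_smul]
  rw [lift_single]
  simp only
  by_cases hk : -α < k
  · have hv' : |m| ≤ α ∧ |k - 1| ≤ α := ⟨hv.1, by have := abs_le.mp hv.2; rw [abs_le]; omega⟩
    rw [bv_valid hv']
    unfold opHp
    rw [lift_single]
    simp only
    rw [smul_smul]
    have h1 : α + (k-1) + 1 = α + k := by ring
    have h2 : α - (k-1) = α - k + 1 := by ring
    have h3 : k - 1 + 1 = k := by ring
    rw [h1, h2, h3, sqc_sq (by nlinarith [abs_le.mp hv.2])]
    rw [bv_valid hv]
  · have hk' : k = -α := by have := abs_le.mp hv.2; omega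
    have hz : (α + k) * (α - k + 1) = 0 := by rw [hk']; ring
    rw [hz]
    simp [sqc]
lemma bv_apply_ne {m : ℤ} (β l : ℤ) (y : VIdx m) (h : β ≠ y.1.1) : (bv m β l) y = 0 := by
  unfold bv
  split
  · rw [Finsupp.single_apply, if_neg]
    intro he
    exact h (by rw [← he])
  · rfl

lemma Cne (m : ℤ) (p : ℂ) (C : ℤ → ℂ) (hC : Csq m p C)
    (hp : ∀ n : ℤ, |m| + 1 ≤ n → ‖p‖ ≠ (n : ℝ)) :
    ∀ α : ℤ, |m| + 1 ≤ α → C α ≠ 0 := by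
  intro α hα h0
  have hα1 : (1:ℤ) ≤ α := le_trans (by have := abs_nonneg m; omega) hα
  have h := hC α hα
  rw [h0, eq_comm] at h
  have h' : (((α:ℂ)^2 - p^2) * ((α:ℂ)^2 - (m:ℂ)^2)) = 0 ∨
      ((α:ℂ)^2 * (4*(α:ℂ)^2 - 1)) = 0 := by
    have h2 : -(((α:ℂ)^2 - p^2) * ((α:ℂ)^2 - (m:ℂ)^2)) /
        ((α:ℂ)^2 * (4*(α:ℂ)^2 - 1)) = 0 := by rw [h]; ring
    rcases div_eq_zero_iff.mp h2 with h3 | h3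
    · exact Or.inl (neg_eq_zero.mp h3)
    · exact Or.inr h3
  rcases h' with h' | h'
  · rcases mul_eq_zero.mp h' with h'' | h''
    · -- p² = α², so |p| = α
      have hfac : (p - (α:ℂ)) * (p + (α:ℂ)) = 0 := by linear_combination -h''
      have habs : ‖p‖ = (α : ℝ) := by
        rcases mul_eq_zero.mp hfac with h4 | h4
        · have : p = (α:ℂ) := by linear_combination h4
          rw [this, Complex.norm_intCast, _root_.abs_of_nonneg (by exact_mod_cast (by linarith : (0:ℤ) ≤ α))]
        · have : p = -(α:ℂ) := by linear_combination h4
          rw [this, norm_neg, Complex.norm_intCast,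
            _root_.abs_of_nonneg (by exact_mod_cast (by linarith : (0:ℤ) ≤ α))]
      exact hp α hα habs
    · -- α² = m² impossible
      have hint : ((α^2 - m^2 : ℤ) : ℂ) = 0 := by push_cast; linear_combination h''
      have hint2 : (α^2 - m^2 : ℤ) = 0 := by exact_mod_cast hint
      have hm2 : m^2 = |m|^2 := (_root_.sq_abs m).symm
      nlinarith [abs_nonneg m]
  · rcases mul_eq_zero.mp h' with h'' | h''
    · have : (α:ℂ) = 0 := by
        have := sq_eq_zero_iff.mp h''
        exact this
      have : α = 0 := by exact_mod_cast this
      omega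
    · have hint : ((4*α^2 - 1 : ℤ) : ℂ) = 0 := by push_cast; linear_combination h''
      have hint2 : (4*α^2 - 1 : ℤ) = 0 := by exact_mod_cast hint
      nlinarith
theorem statement9 (m : ℤ) (p : ℂ) (C : ℤ → ℂ) (hC : Csq m p C) (hC0 : C |m| = 0)
    (hp : ∀ n : ℤ, |m| + 1 ≤ n → ‖p‖ ≠ (n : ℝ)) :
    ∀ T : Module.End ℂ (Vm m),
      T * opH3 m = opH3 m * T →
      T * opHp m = opHp m * T →
      T * opHm m = opHm m * T →
      T * opF3 m p C = opF3 m p C * T →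
      T * opFp m p C = opFp m p C * T →
      T * opFm m p C = opFm m p C * T →
      ∃ c : ℂ, T = c • (1 : Module.End ℂ (Vm m)) := by
  intro T Th3 Thp Thm Tf3 _ _
  have th3 : ∀ v, T (opH3 m v) = opH3 m (T v) := by
    intro v
    have := LinearMap.congr_fun Th3 v
    simpa [Module.End.mul_apply] using this
  have thp : ∀ v, T (opHp m v) = opHp m (T v) := by
    intro v
    have := LinearMap.congr_fun Thp v
    simpa [Module.End.mul_apply] using this
  have thm : ∀ v, T (opHm m v) = opHm m (T v) := by
    intro v
    have := LinearMap.congr_fun Thm v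
    simpa [Module.End.mul_apply] using this
  have tf3 : ∀ v, T (opF3 m p C v) = opF3 m p C (T v) := by
    intro v
    have := LinearMap.congr_fun Tf3 v
    simpa [Module.End.mul_apply] using this
  have tq : ∀ v, T ((opHp m * opHm m) v) = (opHp m * opHm m) (T v) := by
    intro v
    simp only [Module.End.mul_apply]
    rw [← thm, ← thp]
  -- off-diagonal coefficients vanish
  have hdiag0 : ∀ x y : VIdx m, y ≠ x → (T (Finsupp.single x 1)) y = 0 := by
    intro x y hxy
    by_contra hA
    by_cases hk : y.1.2 = x.1.2
    · -- use the Casimir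
      have hα : y.1.1 ≠ x.1.1 := by
        intro hh
        exact hxy (Subtype.ext (Prod.ext hh hk))
      have h1 := tq (Finsupp.single x 1)
      rw [Q_eq] at h1
      rw [lift_single] at h1
      have h2 := congrArg (fun v : Vm m => v y) h1
      simp only [map_smul, Finsupp.smul_apply, smul_eq_mul, lift_diag_apply] at h2
      have h3 : (((x.1.1 + x.1.2) * (x.1.1 - x.1.2 + 1) : ℤ) : ℂ)
          = (((y.1.1 + y.1.2) * (y.1.1 - y.1.2 + 1) : ℤ) : ℂ) := mul_right_cancel₀ hA h2
      have h4 : (x.1.1 + x.1.2) * (x.1.1 - x.1.2 + 1) = (y.1.1 + y.1.2) * (y.1.1 - y.1.2 + 1) := by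
        exact_mod_cast h3
      rw [hk] at h4
      have h5 : (x.1.1 - y.1.1) * (x.1.1 + y.1.1 + 1) = 0 := by linear_combination h4
      have hx2 := abs_le.mp x.2.2
      have hy2 := abs_le.mp y.2.2
      rcases mul_eq_zero.mp h5 with h6 | h6
      · exact hα (by omega)
      · rw [hk] at hy2; omega
    · -- use H₃
      have h1 := th3 (Finsupp.single x 1)
      rw [opH3_eq] at h1
      rw [lift_single] at h1
      have h2 := congrArg (fun v : Vm m => v y) h1
      simp only [map_smul, Finsupp.smul_apply, smul_eq_mul, lift_diag_apply] at h2
      have h3 : ((x.1.2 : ℂ)) = (y.1.2 : ℂ) := mul_right_cancel₀ hA h2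
      exact hk (by exact_mod_cast h3.symm)
  -- T is diagonal
  have hT1 : ∀ x : VIdx m, T (Finsupp.single x 1)
      = (T (Finsupp.single x 1) x) • Finsupp.single x 1 := by
    intro x
    ext y
    rw [Finsupp.smul_apply, Finsupp.single_apply, smul_eq_mul]
    by_cases h : x = y
    · subst h; simp
    · rw [if_neg h, mul_zero, hdiag0 x y (Ne.symm h)]
  have hTbv : ∀ (β l : ℤ) (y : VIdx m), β ≠ y.1.1 → (T (bv m β l)) y = 0 := by
    intro β l y hβ
    unfold bv
    split
    · rename_i h
      rw [hT1, Finsupp.smul_apply, Finsupp.single_apply, if_neg, smul_zero]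
      intro he
      exact hβ (by rw [← he])
    · simp
  -- the diagonal entries, as a function of the integer indices
  set tt : ℤ → ℤ → ℂ :=
    fun α k => if h : |m| ≤ α ∧ |k| ≤ α then T (Finsupp.single ⟨(α,k),h⟩ 1) ⟨(α,k),h⟩ else 0
    with htt
  -- step in k, via H₊
  have stepk : ∀ α k : ℤ, |m| ≤ α → -α ≤ k → k < α → tt α (k+1) = tt α k := by
    intro α k hm' hk1 hk2
    have hx : |m| ≤ α ∧ |k| ≤ α := ⟨hm', abs_le.mpr ⟨hk1, hk2.le⟩⟩
    have hx' : |m| ≤ α ∧ |k+1| ≤ α := ⟨hm', abs_le.mpr ⟨by omega, by omega⟩⟩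
    have h1 := thp (Finsupp.single (⟨(α,k),hx⟩ : VIdx m) 1)
    unfold opHp at h1
    rw [lift_single] at h1
    dsimp only at h1
    rw [bv_valid hx', hT1, map_smul, map_smul, lift_single, hT1] at h1
    dsimp only at h1
    rw [bv_valid hx'] at h1
    have h2 := congrArg (fun v : Vm m => v ⟨(α,k+1),hx'⟩) h1
    simp only [Finsupp.smul_apply, Finsupp.single_eq_same, smul_eq_mul, mul_one] at h2
    have hs : sqc ((α + k + 1) * (α - k)) ≠ 0 := sqc_ne (by nlinarith)
    have h3 := mul_left_cancel₀ hs (h2.trans (mul_comm _ _))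
    simp only [htt]
    rw [dif_pos hx', dif_pos hx]
    exact h3
  -- step in α, via F₃
  have stepa : ∀ α k : ℤ, |m| ≤ α → |k| ≤ α → tt (α+1) k = tt α k := by
    intro α k hm' hk
    have hka := abs_le.mp hk
    have hx : |m| ≤ α ∧ |k| ≤ α := ⟨hm', hk⟩
    have hx'' : |m| ≤ α + 1 ∧ |k| ≤ α + 1 := ⟨by omega, abs_le.mpr ⟨by omega, by omega⟩⟩
    have h1 := tf3 (Finsupp.single (⟨(α,k),hx⟩ : VIdx m) 1)
    unfold opF3 at h1
    rw [lift_single] at h1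
    dsimp only at h1
    rw [hT1, map_smul, lift_single] at h1
    dsimp only at h1
    have h2 := congrArg (fun v : Vm m => v ⟨(α+1,k),hx''⟩) h1
    simp only [map_sub, map_smul, Finsupp.smul_apply, Finsupp.sub_apply, smul_eq_mul] at h2
    rw [hTbv (α-1) k ⟨(α+1,k),hx''⟩ (by dsimp only; omega),
        hTbv α k ⟨(α+1,k),hx''⟩ (by dsimp only; omega)] at h2
    rw [show bv m (α+1) k = Finsupp.single (⟨(α+1,k),hx''⟩ : VIdx m) 1 from bv_valid hx''] at h2
    rw [hT1] at h2
    simp only [Finsupp.smul_apply, Finsupp.single_eq_same, smul_eq_mul, mul_one] at h2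
    rw [bv_apply_ne (α-1) k ⟨(α+1,k),hx''⟩ (by dsimp only; omega),
        bv_apply_ne α k ⟨(α+1,k),hx''⟩ (by dsimp only; omega)] at h2
    -- h2 : 0 - 0 - Cs * t x'' = t x * (0 - 0 - Cs * 1)  (roughly)
    have hCs : C (α+1) * sqc ((α + 1 - k) * (α + 1 + k)) ≠ 0 := by
      apply mul_ne_zero
      · exact Cne m p C hC hp (α+1) (by omega)
      · exact sqc_ne (by nlinarith)
    simp only [htt]
    rw [dif_pos hx'', dif_pos hx]
    have h4 : C (α+1) * sqc ((α + 1 - k) * (α + 1 + k)) *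
        (T (Finsupp.single (⟨(α+1,k),hx''⟩ : VIdx m) 1) ⟨(α+1,k),hx''⟩) =
        C (α+1) * sqc ((α + 1 - k) * (α + 1 + k)) *
        (T (Finsupp.single (⟨(α,k),hx⟩ : VIdx m) 1) ⟨(α,k),hx⟩) := by
      linear_combination -h2
    exact mul_left_cancel₀ hCs h4
  -- diagonal constant along the diagonal k = α
  have claim1 : ∀ α : ℤ, |m| ≤ α → tt α α = tt |m| |m| := by
    refine Int.le_induction rfl ?_
    intro n hn ih
    have hn0 : 0 ≤ n := (abs_nonneg m).trans hn
    rw [stepk (n+1) n (by omega) (by omega) (by omega),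
      stepa n n hn (le_of_eq (abs_of_nonneg hn0))]
    exact ih
  -- diagonal constant in k for fixed α
  have claim2 : ∀ (n : ℕ) (α k : ℤ), |m| ≤ α → -α ≤ k → k + n = α → tt α k = tt α α := by
    intro n
    induction n with
    | zero =>
      intro α k _ _ hsum
      have : k = α := by omega
      rw [this]
    | succ n ih =>
      intro α k h1 h2 hsum
      rw [← stepk α k h1 h2 (by omega)]
      exact ih α (k+1) h1 (by omega) (by omega)
  -- conclude
  refine ⟨tt |m| |m|, ?_⟩
  apply Finsupp.lhom_ext
  intro a b
  have hsingle : (Finsupp.single a b : Vm m) = b • Finsupp.single a 1 := by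
    rw [Finsupp.smul_single, smul_eq_mul, mul_one]
  have hta : T (Finsupp.single a 1) a = tt |m| |m| := by
    have hvalid := a.2
    have heq : tt a.1.1 a.1.2 = T (Finsupp.single a 1) a := by
      simp only [htt]
      rw [dif_pos a.2]
    rw [← heq, claim2 (a.1.1 - a.1.2).toNat a.1.1 a.1.2 a.2.1 (abs_le.mp a.2.2).1
        (by have := abs_le.mp a.2.2; omega), claim1 a.1.1 a.2.1]
  rw [hsingle, map_smul, map_smul, hT1, hta]
  simp [smul_smul, mul_comm]
end
end
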